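/- arXiv:1501.01712 — 3 statements merged into one kernel-verified Lean document; each statement's English description precedes it below -/
import Mathlib

section
/- Let E be a row-finite directed graph with no sources and n ≥ 1. There is a bijection from the set {(μ,ν) : μ ∈ E*, ν a path of length < n with r(ν) = s(μ)} to the set of paths of the graph E(n), under which the pair (μ,ν) corresponds to a path of length |μ| in E(n) with source ν and range [μν]_n. -/
/-- A directed graph: vertices, edges, range and source maps. -/
structure DGraph where
  V : Type
  E : Type
  r : E → V
  s : E → V

namespace DGraph

variable {G : DGraph}

/-- A path in a directed graph: a word of composable edges together with a source vertex
(so that length-zero paths are vertices). -/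
structure Path (G : DGraph) where
  src : G.V
  edges : List G.E
  chain : List.Chain' (fun a b => G.s a = G.r b) edges
  srcEq : ∀ a ∈ edges.getLast?, G.s a = src

/-- The range of a path. -/
def Path.rng (p : G.Path) : G.V := p.edges.head?.elim p.src G.r

/-- The length of a path. -/
def Path.length (p : G.Path) : ℕ := p.edges.length

/-- The length-zero path at a vertex. -/
def Path.nil (G : DGraph) (v : G.V) : G.Path :=
  ⟨v, [], List.isChain_nil, by simp⟩

@[simp] theorem Path.length_nil (v : G.V) : (Path.nil G v).length = 0 := rfl

/-- Prepend an edge to a path. -/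
def Path.cons (e : G.E) (p : G.Path) (h : p.rng = G.s e) : G.Path where
  src := p.src
  edges := e :: p.edges
  chain := by
    unfold List.Chain'
    rw [List.isChain_cons]
    refine ⟨fun b hb => ?_, p.chain⟩
    rw [← h]
    simp [Path.rng, Option.mem_def.mp hb]
  srcEq := by
    intro a ha
    cases hp : p.edges with
    | nil =>
      rw [hp] at ha
      simp only [List.getLast?_singleton, Option.mem_def, Option.some.injEq] at ha
      subst ha
      have h0 : p.rng = p.src := by simp [Path.rng, hp]
      rw [← h, h0]
    | cons f t =>
      apply p.srcEq
      rw [hp]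
      rw [hp, List.getLast?_cons_cons] at ha
      exact ha

@[simp] theorem Path.length_cons (e : G.E) (p : G.Path) (h : p.rng = G.s e) :
    (Path.cons e p h).length = p.length + 1 := rfl

/-- Remove the first edge of a path. -/
def Path.tail (p : G.Path) : G.Path where
  src := p.src
  edges := p.edges.tail
  chain := p.chain.tail
  srcEq := by
    intro a ha
    apply p.srcEq
    cases hp : p.edges with
    | nil => rw [hp] at ha; simp at ha
    | cons f t =>
      rw [hp] at ha
      simp only [List.tail_cons] at ha
      cases t with
      | nil => simp at ha
      | cons g u => rw [List.getLast?_cons_cons]; exact ha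

@[simp] theorem Path.length_tail (p : G.Path) : p.tail.length = p.length - 1 := by
  simp [Path.tail, Path.length]

/-- The initial segment of a path consisting of its first `k` edges. -/
def Path.take (p : G.Path) (k : ℕ) : G.Path where
  src := (p.edges.drop k).head?.elim p.src G.r
  edges := p.edges.take k
  chain := p.chain.take k
  srcEq := by
    intro a ha
    have hc : List.Chain' (fun a b => G.s a = G.r b) (p.edges.take k ++ p.edges.drop k) := by
      rw [List.take_append_drop]; exact p.chain
    unfold List.Chain' at hc
    rw [List.isChain_append] at hc
    obtain ⟨-, -, hadj⟩ := hc
    cases hd : p.edges.drop k with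
    | nil =>
      have htake : p.edges.take k = p.edges := by
        have h1 := List.take_append_drop k p.edges
        rw [hd, List.append_nil] at h1
        exact h1
      simp only [List.head?_nil, Option.elim]
      exact p.srcEq a (htake ▸ ha)
    | cons f t =>
      simp only [List.head?_cons, Option.elim]
      exact hadj a ha f (by rw [hd]; simp)

/-- `[μ]_n` : the initial segment of `μ` of length `|μ| mod n`. -/
def Path.trunc (m : ℕ) (p : G.Path) : G.Path := p.take (p.length % m)

/-- Concatenation of paths, `p` followed after `q` (so `p.append q` has range the range of `p`
and source the source of `q`). -/
def Path.append (p q : G.Path) (h : p.src = q.rng) : G.Path where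
  src := q.src
  edges := p.edges ++ q.edges
  chain := by
    unfold List.Chain'
    rw [List.isChain_append]
    refine ⟨p.chain, q.chain, fun a ha b hb => ?_⟩
    rw [p.srcEq a ha, h]
    simp [Path.rng, Option.mem_def.mp hb]
  srcEq := by
    intro a ha
    cases hq : q.edges with
    | nil =>
      rw [hq, List.append_nil] at ha
      have h0 : q.rng = q.src := by simp [Path.rng, hq]
      rw [p.srcEq a ha, h, h0]
    | cons f t =>
      apply q.srcEq
      rw [hq]
      rw [hq, List.getLast?_append_cons] at ha
      exact ha

/-- A graph is row-finite if every vertex receives finitely many edges. -/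
def RowFinite (G : DGraph) : Prop := ∀ v : G.V, {e : G.E | G.r e = v}.Finite

/-- A graph has no sources if every vertex receives an edge. -/
def NoSources (G : DGraph) : Prop := ∀ v : G.V, ∃ e : G.E, G.r e = v

/-- A graph is strongly connected if for all vertices `v, w` there is a path from `w` to `v`. -/
def StronglyConnected (G : DGraph) : Prop :=
  ∀ v w : G.V, ∃ p : G.Path, p.src = w ∧ p.rng = v

/-- The set of paths of length less than `n`. -/
abbrev PathLt (G : DGraph) (n : ℕ) := {p : G.Path // p.length < n}

/-- The graph `E(n)` of Kribs and Solel: vertices are paths of length `< n`, and edges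
are pairs `(e, μ)` with `r(μ) = s(e)` and `|μ| < n`, with source `μ` and range `[eμ]_n`. -/
def Eln (G : DGraph) (n : ℕ) : DGraph where
  V := PathLt G n
  E := {q : G.E × G.Path // q.2.length + 1 ≤ n ∧ q.2.rng = G.s q.1}
  s := fun q => ⟨q.1.2, Nat.lt_of_succ_le q.2.1⟩
  r := fun q =>
    if h : q.1.2.length + 1 < n then
      ⟨Path.cons q.1.1 q.1.2 q.2.2, by simpa using h⟩
    else
      ⟨Path.nil G (G.r q.1.1), Nat.lt_of_lt_of_le (Nat.succ_pos _) q.2.1⟩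

/-- A vertex of `E`, regarded as a length-zero vertex of `E(n)`. -/
def vtx (G : DGraph) (n : ℕ) (hn : 0 < n) (v : G.V) : PathLt G n :=
  ⟨Path.nil G v, by simpa using hn⟩

/-- `d` is the greatest common divisor of the set `S` of natural numbers. -/
def IsGCDOf (d : ℕ) (S : Set ℕ) : Prop :=
  (∀ k ∈ S, d ∣ k) ∧ ∀ c : ℕ, (∀ k ∈ S, c ∣ k) → c ∣ d

/-- The set of lengths of (nonempty) cycles of `G`. -/
def CycleLengths (G : DGraph) : Set ℕ :=
  {k | ∃ p : G.Path, p.rng = p.src ∧ p.edges ≠ [] ∧ p.length = k}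

/-- The set of lengths of (nonempty) cycles of `G` based at `v`. -/
def CycleLengthsAt (G : DGraph) (v : G.V) : Set ℕ :=
  {k | ∃ p : G.Path, p.src = v ∧ p.rng = v ∧ p.edges ≠ [] ∧ p.length = k}

/-- The relation `v ∼ w` iff there is a path from `w` to `v` whose length is divisible by `d`. -/
def SimRel (G : DGraph) (d : ℕ) (v w : G.V) : Prop :=
  ∃ p : G.Path, p.src = w ∧ p.rng = v ∧ d ∣ p.length

/-- The connected-component relation of a graph: the smallest equivalence relation
identifying the range and the source of each edge. -/
def Comp (G : DGraph) : G.V → G.V → Prop :=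
  Relation.EqvGen (fun a b => ∃ f : G.E, G.r f = a ∧ G.s f = b)

/-- The adjacency matrix of `E(n)` acting on vectors indexed by `E^{<n}`. -/
noncomputable def Aact (G : DGraph) (n : ℕ) (g : PathLt G n → ℝ) (v : PathLt G n) : ℝ :=
  ∑ᶠ (f : (Eln G n).E) (_ : (Eln G n).r f = v), g ((Eln G n).s f)

/-- The pushforward of a vector on `E^{<n}` along `ν ↦ [ν]_m`. -/
noncomputable def pushf (G : DGraph) (n m : ℕ) (g : PathLt G n → ℝ) (μ : PathLt G m) : ℝ :=
  ∑ᶠ (ν : PathLt G n) (_ : Path.trunc m ν.1 = μ.1), g ν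

instance : TopologicalSpace G.Path := ⊥

/-- The inverse limit `lim← E^{<n_k}` along the truncation maps. -/
def InvLim (G : DGraph) (n : ℕ → ℕ) : Type :=
  {f : (k : ℕ) → PathLt G (n k) // ∀ k, Path.trunc (n k) (f (k+1)).1 = (f k).1}

instance (G : DGraph) (n : ℕ → ℕ) : TopologicalSpace (InvLim G n) :=
  inferInstanceAs (TopologicalSpace
    {f : (k : ℕ) → PathLt G (n k) // ∀ k, Path.trunc (n k) (f (k+1)).1 = (f k).1})

noncomputable instance (G : DGraph) (n : ℕ → ℕ) : MeasurableSpace (InvLim G n) := borel _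

end DGraph

/-! The range of an edge `(e, κ)` of `E(n)` is forced by `e` and `κ`, so a path of `E(n)` is
determined by its source `ν` and the path `μ` of `E` underneath it, and every `μ` with
`s(μ) = r(ν)` lifts to a path of `E(n)` starting at `ν`. Since `[e[λ]_n]_n = [eλ]_n`, the
vertices visited by the lift are the truncations of the initial pieces of `μν`. -/

namespace DGraph

variable {G : DGraph}

namespace Path

theorem ext {p q : G.Path} (hsrc : p.src = q.src) (hedges : p.edges = q.edges) : p = q := by
  cases p; cases q; simp_all

@[simp] theorem edges_nil (v : G.V) : (Path.nil G v).edges = [] := rfl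
@[simp] theorem rng_nil (v : G.V) : (Path.nil G v).rng = v := rfl
@[simp] theorem edges_cons (e : G.E) (p : G.Path) (h : p.rng = G.s e) :
    (Path.cons e p h).edges = e :: p.edges := rfl
@[simp] theorem rng_cons (e : G.E) (p : G.Path) (h : p.rng = G.s e) :
    (Path.cons e p h).rng = G.r e := rfl
@[simp] theorem edges_append (p q : G.Path) (h : p.src = q.rng) :
    (p.append q h).edges = p.edges ++ q.edges := rfl

@[elab_as_elim]
theorem cons_induction {P : G.Path → Prop} (nil : ∀ v, P (Path.nil G v))
    (cons : ∀ e p h, P p → P (Path.cons e p h)) (p : G.Path) : P p := by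
  obtain ⟨src, edges, chain, srcEq⟩ := p
  induction edges generalizing src with
  | nil => exact nil src
  | cons e t ih =>
    let p : G.Path := ⟨src, e :: t, chain, srcEq⟩
    have hrng : p.tail.rng = G.s e := by
      cases t with
      | nil => exact (srcEq e rfl).symm
      | cons _ _ => exact ((List.isChain_cons_cons.mp chain).1).symm
    exact cons e p.tail hrng (ih _ _ _)

theorem rng_append (p q : G.Path) (h : p.src = q.rng) : (p.append q h).rng = p.rng := by
  cases hp : p.edges with
  | nil =>
    have hp' : p.rng = q.rng := by rw [← h]; simp [Path.rng, hp]
    rw [hp']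
    simp [Path.rng, Path.append, hp]
  | cons e t => simp [Path.rng, hp]

theorem rng_take (p : G.Path) (k : ℕ) : (p.take k).rng = p.rng := by
  cases k with
  | zero => rfl
  | succ k => cases hp : p.edges <;> simp [Path.rng, Path.take, hp]

theorem take_zero (p : G.Path) : p.take 0 = Path.nil G p.rng := rfl

theorem take_succ_cons (e : G.E) (p : G.Path) (h : p.rng = G.s e) (k : ℕ) :
    (Path.cons e p h).take (k + 1) = Path.cons e (p.take k) (by rw [rng_take]; exact h) := rfl

@[simp] theorem length_trunc (n : ℕ) (p : G.Path) : (trunc n p).length = p.length % n := by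
  simp only [trunc, Path.length, Path.take, List.length_take]
  exact Nat.min_eq_left (Nat.mod_le _ _)

theorem trunc_eq_self {n : ℕ} {p : G.Path} (h : p.length < n) : trunc n p = p := by
  rw [trunc, Nat.mod_eq_of_lt h]
  exact ext (by simp [Path.take, Path.length]) (by simp [Path.take, Path.length])

end Path

namespace Eln

variable {n : ℕ}

theorem r_val_eq_trunc_cons (f : (Eln G n).E) {p : G.Path} (hf : f.1.2 = p.trunc n)
    (h : p.rng = G.s f.1.1) : ((Eln G n).r f).1 = (Path.cons f.1.1 p h).trunc n := by
  obtain ⟨⟨e, κ⟩, hlen, _⟩ := f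
  subst hf
  rw [Path.length_trunc] at hlen
  -- `(|p| + 1) mod n` either increments `|p| mod n` or wraps around to `0`, matching the two
  -- branches in the definition of the range map of `E(n)`.
  by_cases hlt : p.length % n + 1 < n
  · have hmod : (p.length + 1) % n = p.length % n + 1 := by
      rw [← Nat.mod_add_mod, Nat.mod_eq_of_lt hlt]
    simp only [Eln, Path.length_trunc, dif_pos hlt]
    rw [show (Path.cons e p h).trunc n = (Path.cons e p h).take ((p.length + 1) % n) from rfl,
      hmod, Path.take_succ_cons]
    rfl
  · have hmod : (p.length + 1) % n = 0 := by
      rw [← Nat.mod_add_mod, (by omega : p.length % n + 1 = n), Nat.mod_self]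
    simp only [Eln, Path.length_trunc, dif_neg hlt]
    rw [show (Path.cons e p h).trunc n = (Path.cons e p h).take ((p.length + 1) % n) from rfl,
      hmod, Path.take_zero]
    rfl

theorem rng_r_val (f : (Eln G n).E) : ((Eln G n).r f).1.rng = G.r f.1.1 := by
  by_cases h : f.1.2.length + 1 < n <;> simp [Eln, h]

def proj (q : (Eln G n).Path) : G.Path where
  src := q.src.1.rng
  edges := q.edges.map (fun f => f.1.1)
  chain := by
    refine (List.isChain_map _).mpr (q.chain.imp fun a b hab => ?_)
    rw [← a.2.2, ← rng_r_val b, ← hab]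
    rfl
  srcEq := by
    intro a ha
    rw [List.getLast?_map, Option.mem_map] at ha
    obtain ⟨f, hf, rfl⟩ := ha
    rw [← f.2.2, ← q.srcEq f hf]
    rfl

theorem length_proj (q : (Eln G n).Path) : (proj q).length = q.length := List.length_map _

theorem rng_proj (q : (Eln G n).Path) : (proj q).rng = q.rng.1.rng := by
  cases hq : q.edges with
  | nil => simp [proj, Path.rng, hq]
  | cons f t =>
    have hproj : (proj q).rng = G.r f.1.1 := by simp [proj, Path.rng, hq]
    have hq' : q.rng = (Eln G n).r f := by simp [Path.rng, hq]
    rw [hproj, hq', rng_r_val]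

theorem rng_val_eq_trunc (q : (Eln G n).Path) :
    q.rng.1 = ((proj q).append q.src.1 rfl).trunc n := by
  induction q using Path.cons_induction with
  | nil v => exact (Path.trunc_eq_self v.2).symm
  | cons f q h ih =>
    have hf : f.1.2 = ((proj q).append q.src.1 rfl).trunc n := by
      rw [← ih, h]
      rfl
    have hrng : ((proj q).append q.src.1 rfl).rng = G.s f.1.1 := by
      refine (Path.rng_append _ _ _).trans ((rng_proj q).trans ?_)
      rw [h]
      exact f.2.2
    exact r_val_eq_trunc_cons f hf hrng

theorem eq_of_src_eq_of_proj_eq {q q' : (Eln G n).Path} (hsrc : q.src = q'.src)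
    (hproj : proj q = proj q') : q = q' := by
  induction q using Path.cons_induction generalizing q' with
  | nil v =>
    cases q' using Path.cons_induction with
    | nil _ => exact congrArg _ hsrc
    | cons _ _ _ => exact absurd (congrArg Path.edges hproj) (by simp [proj])
  | cons f q h ih =>
    cases q' using Path.cons_induction with
    | nil _ => exact absurd (congrArg Path.edges hproj) (by simp [proj])
    | cons f' q' h' =>
      obtain ⟨hhead, htail⟩ := List.cons_eq_cons.mp (congrArg Path.edges hproj)
      obtain rfl : q = q' := ih hsrc (Path.ext (congrArg (·.1.rng) hsrc) htail)
      obtain rfl : f = f' := Subtype.ext (Prod.ext hhead (congrArg Subtype.val (h.symm.trans h')))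
      rfl

theorem exists_src_eq_and_proj_eq (μ : G.Path) (ν : PathLt G n) (h : ν.1.rng = μ.src) :
    ∃ q : (Eln G n).Path, q.src = ν ∧ proj q = μ := by
  induction μ using Path.cons_induction with
  | nil v => exact ⟨Path.nil _ ν, rfl, Path.ext h rfl⟩
  | cons e μ hμ ih =>
    obtain ⟨q, rfl, rfl⟩ := ih h
    let f : (Eln G n).E := ⟨(e, q.rng.1), q.rng.2, by rw [← rng_proj]; exact hμ⟩
    exact ⟨Path.cons f q rfl, rfl, Path.ext rfl rfl⟩

def toPair (q : (Eln G n).Path) :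
    {x : G.Path × G.Path // x.2.length < n ∧ x.2.rng = x.1.src} :=
  ⟨(proj q, q.src.1), q.src.2, rfl⟩

theorem toPair_bijective : Function.Bijective (toPair : (Eln G n).Path → _) := by
  refine ⟨fun q q' h => ?_, fun ⟨(μ, ν), hν, h⟩ => ?_⟩
  · have h' := congrArg Subtype.val h
    exact eq_of_src_eq_of_proj_eq (Subtype.ext (congrArg Prod.snd h')) (congrArg Prod.fst h')
  · obtain ⟨q, hsrc, hproj⟩ := exists_src_eq_and_proj_eq μ ⟨ν, hν⟩ h
    exact ⟨q, Subtype.ext (Prod.ext hproj (congrArg Subtype.val hsrc))⟩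

end Eln

end DGraph

open DGraph in
theorem Eln_paths_equiv_general (G : DGraph) (n : ℕ) :
    ∃ F : {q : G.Path × G.Path // q.2.length < n ∧ q.2.rng = q.1.src} ≃ Path (Eln G n),
      ∀ x, (F x).length = x.1.1.length ∧
        (F x).src = (⟨x.1.2, x.2.1⟩ : PathLt G n) ∧
        ((F x).rng).1 = Path.trunc n (x.1.1.append x.1.2 x.2.2.symm) := by
  refine ⟨(Equiv.ofBijective _ Eln.toPair_bijective).symm, fun x => ?_⟩
  obtain ⟨q, rfl⟩ := Eln.toPair_bijective.2 x
  rw [Equiv.ofBijective_symm_apply_apply]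
  exact ⟨(Eln.length_proj q).symm, rfl, Eln.rng_val_eq_trunc q⟩

open DGraph in
/-- For a row-finite directed graph `E` with no sources and `n ≥ 1`, there
is a bijection from `{(μ,ν) : μ ∈ E*, ν ∈ s(μ)E^{<n}}` to the set of paths of `E(n)`, under
which `(μ,ν)` corresponds to a path of length `|μ|` with source `ν` and range `[μν]_n`. -/
theorem Eln_paths_equiv (G : DGraph) (hrf : RowFinite G) (hns : NoSources G)
    (n : ℕ) (hn : 0 < n) :
    ∃ F : {q : G.Path × G.Path // q.2.length < n ∧ q.2.rng = q.1.src} ≃ Path (Eln G n),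
      ∀ x, (F x).length = x.1.1.length ∧
        (F x).src = (⟨x.1.2, x.2.1⟩ : PathLt G n) ∧
        ((F x).rng).1 = Path.trunc n (x.1.1.append x.1.2 x.2.2.symm) :=
  Eln_paths_equiv_general G n
end

section
/- Let E be a strongly connected finite directed graph with no sources and n ∈ ℕ. There is a well-defined function C_n : E^0 × E^0 → ℤ/gcd(P_E, n)ℤ such that C_n(r(λ), s(λ)) = |λ| mod gcd(P_E, n) for every path λ; that is, any two paths with the same range and source have lengths congruent modulo gcd(P_E, n). -/
namespace DGraph

variable {G : DGraph}

theorem Path.rng_append_s5 (p q : G.Path) (h : p.src = q.rng) : (p.append q h).rng = p.rng := by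
  show (p.edges ++ q.edges).head?.elim q.src G.r = p.rng
  cases hp : p.edges with
  | nil =>
    have : p.src = q.edges.head?.elim q.src G.r := h
    simp [Path.rng, hp, ← this]
  | cons e t => simp [Path.rng, hp]

theorem Path.length_append (p q : G.Path) (h : p.src = q.rng) :
    (p.append q h).length = p.length + q.length :=
  List.length_append

theorem IsGCDOf.dvd_length_of_rng_eq_src {P : ℕ} (hP : IsGCDOf P (CycleLengths G))
    {c : G.Path} (hc : c.rng = c.src) : P ∣ c.length := by
  by_cases he : c.edges = []
  · simp [Path.length, he]
  · exact hP.1 c.length ⟨c, hc, he, rfl⟩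

theorem StronglyConnected.length_modEq {P : ℕ} (hsc : StronglyConnected G)
    (hP : IsGCDOf P (CycleLengths G)) {p q : G.Path} (hr : p.rng = q.rng) (hs : p.src = q.src) :
    p.length ≡ q.length [MOD P] := by
  obtain ⟨r, hr_src, hr_rng⟩ := hsc p.src p.rng
  have hp_closed : P ∣ p.length + r.length := by
    rw [← Path.length_append p r hr_rng.symm]
    exact hP.dvd_length_of_rng_eq_src (by rw [Path.rng_append_s5]; exact hr_src.symm)
  have hq_closed : P ∣ q.length + r.length := by
    rw [← Path.length_append q r (hs ▸ hr_rng.symm)]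
    exact hP.dvd_length_of_rng_eq_src (by rw [Path.rng_append_s5, ← hr]; exact hr_src.symm)
  exact Nat.ModEq.add_right_cancel' r.length
    (((Nat.modEq_zero_iff_dvd).2 hp_closed).trans ((Nat.modEq_zero_iff_dvd).2 hq_closed).symm)

end DGraph

open DGraph in
theorem exists_Cn_general (G : DGraph)
    (hsc : StronglyConnected G)
    (n P : ℕ) (hP : IsGCDOf P (CycleLengths G)) :
    (∀ p q : G.Path, p.rng = q.rng → p.src = q.src →
      (p.length : ZMod (Nat.gcd P n)) = (q.length : ZMod (Nat.gcd P n))) ∧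
    ∃ C : G.V × G.V → ZMod (Nat.gcd P n),
      ∀ p : G.Path, C (p.rng, p.src) = (p.length : ZMod (Nat.gcd P n)) := by
  have length_eq : ∀ p q : G.Path, p.rng = q.rng → p.src = q.src →
      (p.length : ZMod (Nat.gcd P n)) = (q.length : ZMod (Nat.gcd P n)) :=
    fun p q hr hs => (ZMod.natCast_eq_natCast_iff _ _ _).2
      ((hsc.length_modEq hP hr hs).of_dvd (Nat.gcd_dvd_left P n))
  have factors : Function.FactorsThrough (fun p : G.Path => (p.length : ZMod (Nat.gcd P n)))
      (fun p => (p.rng, p.src)) :=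
    fun p q h => length_eq p q (Prod.ext_iff.1 h).1 (Prod.ext_iff.1 h).2
  exact ⟨length_eq, Function.extend _ _ 0, factors.extend_apply 0⟩

open DGraph in
/-- Let `E` be a strongly connected finite directed graph with no sources,
`n ∈ ℕ`, and `P_E` its period.  Any two paths with the same range and source have lengths
congruent modulo `gcd(P_E, n)`, and there is a well-defined `C_n : E^0 × E^0 → ℤ/gcd(P_E,n)ℤ`
with `C_n(r(λ), s(λ)) = |λ| mod gcd(P_E, n)` for every path `λ`. -/
theorem exists_Cn (G : DGraph) [Finite G.V] [Finite G.E]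
    (hsc : StronglyConnected G) (hns : NoSources G)
    (n P : ℕ) (hP : IsGCDOf P (CycleLengths G)) :
    (∀ p q : G.Path, p.rng = q.rng → p.src = q.src →
      (p.length : ZMod (Nat.gcd P n)) = (q.length : ZMod (Nat.gcd P n))) ∧
    ∃ C : G.V × G.V → ZMod (Nat.gcd P n),
      ∀ p : G.Path, C (p.rng, p.src) = (p.length : ZMod (Nat.gcd P n)) :=
  exists_Cn_general G hsc n P hP
end

section
/- Let E be a finite directed graph with no sources and m | n with m, n ≥ 1. The adjacency matrices A_m of E(m) and A_n of E(n) are intertwined by the pushforward along p_{n,m} : E^{<n} → E^{<m}, ν ↦ [ν]_m: for every m ∈ ℝ^{E^{<n}}, A_m(p_{n,m}* m) = p_{n,m}*(A_n m), where (p* m)(μ) = Σ_{ν : [ν]_m = μ} m(ν). -/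
/-!
The edge map `(e, ν) ↦ (e, [ν]_m)` from `E(n)` to `E(m)` lies over the vertex map
`ν ↦ [ν]_m`. It commutes with the range maps because `m ∣ n`: truncating `eν` below `n` and then
below `m` gives the same path as truncating `e[ν]_m` below `m`. Over each edge `(e, λ)` of `E(m)`,
the source map is a bijection from the fibre onto the paths `ν` with `[ν]_m = λ`. Splitting both
sides of the identity along the fibres of these maps turns one sum into the other.
-/

theorem finsum_cond_fiberwise {α β M : Type*} [AddCommMonoid M] [Finite α] [Finite β]
    (π : α → β) (P : β → Prop) (h : α → M) :
    ∑ᶠ (b) (_ : P b), ∑ᶠ (a) (_ : π a = b), h a = ∑ᶠ (a) (_ : P (π a)), h a := by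
  classical
  have := Fintype.ofFinite α
  have := Fintype.ofFinite β
  simp only [finsum_eq_sum_of_fintype, finsum_eq_if]
  simp_rw [← Finset.sum_filter]
  rw [← Finset.sum_fiberwise_of_maps_to (t := Finset.univ.filter P) (g := π) (by simp)]
  refine Finset.sum_congr rfl fun b hb => ?_
  rw [Finset.filter_filter]
  refine Finset.sum_congr (Finset.filter_congr fun a _ => ?_) fun _ _ => rfl
  grind

namespace DGraph

noncomputable def adj {M : Type*} [AddCommMonoid M] (H : DGraph) (g : H.V → M) (v : H.V) : M :=
  ∑ᶠ (f : H.E) (_ : H.r f = v), g (H.s f)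

noncomputable def pushforward {α β M : Type*} [AddCommMonoid M] (π : α → β) (g : α → M)
    (b : β) : M :=
  ∑ᶠ (a) (_ : π a = b), g a

theorem adj_pushforward_of_bijOn {H H' : DGraph} [Finite H.V] [Finite H.E] [Finite H'.E]
    {M : Type*} [AddCommMonoid M] (π : H.V → H'.V) (φ : H.E → H'.E)
    (hr : ∀ f, H'.r (φ f) = π (H.r f))
    (hs : ∀ f', Set.BijOn H.s {f | φ f = f'} {v | π v = H'.s f'}) (g : H.V → M) (v' : H'.V) :
    adj H' (pushforward π g) v' = pushforward π (adj H g) v' := by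
  have hfibre : ∀ f', ∑ᶠ (f) (_ : φ f = f'), g (H.s f) = pushforward π g (H'.s f') :=
    fun f' => finsum_mem_eq_of_bijOn H.s (hs f') fun _ _ => rfl
  calc adj H' (pushforward π g) v'
      = ∑ᶠ (f') (_ : H'.r f' = v'), ∑ᶠ (f) (_ : φ f = f'), g (H.s f) := by
        simp only [adj, hfibre]
    _ = ∑ᶠ (f) (_ : π (H.r f) = v'), g (H.s f) := by
        simp only [finsum_cond_fiberwise, hr]
    _ = pushforward π (adj H g) v' := (finsum_cond_fiberwise H.r (π · = v') _).symm

variable {G : DGraph}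

theorem Path.ext_of_edges_rng {p q : G.Path} (he : p.edges = q.edges) (hr : p.rng = q.rng) :
    p = q := by
  obtain ⟨ps, pe, _, psrc⟩ := p
  obtain ⟨qs, qe, _, qsrc⟩ := q
  obtain rfl : pe = qe := he
  obtain rfl : ps = qs := by
    cases hl : pe.getLast? with
    | none =>
      obtain rfl := List.getLast?_eq_none_iff.mp hl
      exact hr
    | some a => exact (psrc a hl).symm.trans (qsrc a hl)
  rfl

@[simp] theorem Path.rng_nil_s14 (v : G.V) : (Path.nil G v).rng = v := rfl

@[simp] theorem Path.rng_cons_s14 (e : G.E) (p : G.Path) (h : p.rng = G.s e) :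
    (Path.cons e p h).rng = G.r e := rfl

@[simp] theorem Path.rng_take_s14 (p : G.Path) (k : ℕ) : (p.take k).rng = p.rng := by
  rcases p with ⟨_, _ | ⟨_, _⟩, _, _⟩ <;> cases k <;> simp [Path.rng, Path.take]

@[simp] theorem Path.rng_trunc (m : ℕ) (p : G.Path) : (Path.trunc m p).rng = p.rng :=
  Path.rng_take_s14 p _

theorem Path.edges_trunc (m : ℕ) (p : G.Path) :
    (Path.trunc m p).edges = p.edges.take (p.length % m) := rfl

@[simp] theorem Path.length_trunc_s14 (m : ℕ) (p : G.Path) :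
    (Path.trunc m p).length = p.length % m :=
  (List.length_take ..).trans (min_eq_left (Nat.mod_le _ _))

theorem Path.trunc_trunc_of_dvd {m n : ℕ} (hdvd : m ∣ n) (p : G.Path) :
    Path.trunc m (Path.trunc n p) = Path.trunc m p := by
  refine Path.ext_of_edges_rng ?_ (by simp)
  rw [Path.edges_trunc, Path.length_trunc_s14, Path.edges_trunc, Path.edges_trunc, List.take_take,
    min_eq_left (Nat.mod_le _ _), Nat.mod_mod_of_dvd _ hdvd]

theorem Path.trunc_cons_trunc (m : ℕ) (e : G.E) (p : G.Path) (h : p.rng = G.s e)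
    (h' : (Path.trunc m p).rng = G.s e) :
    Path.trunc m (Path.cons e (Path.trunc m p) h') = Path.trunc m (Path.cons e p h) := by
  refine Path.ext_of_edges_rng ?_ (by simp)
  have hle : (p.length + 1) % m ≤ p.length % m + 1 :=
    Nat.mod_add_mod p.length m 1 ▸ Nat.mod_le _ _
  simp only [Path.edges_trunc, Path.length_cons, Path.length_trunc_s14, Nat.mod_add_mod]
  rcases hk : (p.length + 1) % m with _ | k
  · rfl
  · simp only [Path.cons, Path.edges_trunc, List.take_succ_cons, List.take_take]
    rw [min_eq_left (by omega)]

theorem Eln_r_eq_trunc_cons (n : ℕ) (f : (Eln G n).E) :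
    ((Eln G n).r f).1 = Path.trunc n (Path.cons f.1.1 f.1.2 f.2.2) := by
  refine Path.ext_of_edges_rng ?_ ?_
  · simp only [Eln, Path.edges_trunc, Path.length_cons]
    split_ifs with h
    · rw [Nat.mod_eq_of_lt h]
      exact (List.take_length ..).symm
    · have hmod : (f.1.2.length + 1) % n = 0 := by
        rw [show f.1.2.length + 1 = n by have := f.2.1; omega, Nat.mod_self]
      simp only [hmod]
      rfl
  · simp only [Eln]
    split_ifs <;> simp

instance finite_pathLt [Finite G.V] [Finite G.E] (n : ℕ) : Finite (PathLt G n) :=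
  have : Finite {l : List G.E // l.length < n} := (List.finite_length_lt G.E n).to_subtype
  Finite.of_injective
    (fun p : PathLt G n => (p.1.rng, (⟨p.1.edges, p.2⟩ : {l : List G.E // l.length < n})))
    fun _ _ h => Subtype.ext (Path.ext_of_edges_rng (congrArg (·.2.1) h) (congrArg Prod.fst h))

instance finite_Eln_V [Finite G.V] [Finite G.E] (n : ℕ) : Finite (Eln G n).V :=
  finite_pathLt n

instance finite_Eln_E [Finite G.V] [Finite G.E] (n : ℕ) : Finite (Eln G n).E :=
  Finite.of_injective (fun f : (Eln G n).E => (f.1.1, ((Eln G n).s f : PathLt G n)))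
    fun _ _ h => Subtype.ext (Prod.ext (congrArg (·.1) h) (congrArg (·.2.1) h))

variable {m n : ℕ}

def truncLt (hm : 0 < m) (ν : PathLt G n) : PathLt G m :=
  ⟨Path.trunc m ν.1, by rw [Path.length_trunc_s14]; exact Nat.mod_lt _ hm⟩

def truncEdge (hm : 0 < m) (f : (Eln G n).E) : (Eln G m).E :=
  ⟨(f.1.1, Path.trunc m f.1.2),
    by rw [Path.length_trunc_s14]; exact Nat.mod_lt _ hm, by rw [Path.rng_trunc]; exact f.2.2⟩

theorem r_truncEdge (hm : 0 < m) (hdvd : m ∣ n) (f : (Eln G n).E) :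
    (Eln G m).r (truncEdge hm f) = truncLt hm ((Eln G n).r f) := by
  apply Subtype.ext
  change _ = Path.trunc m ((Eln G n).r f).1
  rw [Eln_r_eq_trunc_cons, Eln_r_eq_trunc_cons, Path.trunc_trunc_of_dvd hdvd]
  exact Path.trunc_cons_trunc m f.1.1 f.1.2 f.2.2 _

theorem bijOn_s_truncEdge (hm : 0 < m) (f' : (Eln G m).E) :
    Set.BijOn (Eln G n).s {f | truncEdge hm f = f'} {ν | truncLt hm ν = (Eln G m).s f'} := by
  refine ⟨?_, ?_, ?_⟩
  · rintro f rfl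
    rfl
  · rintro f₁ rfl f₂ h₂ hs
    exact Subtype.ext (Prod.ext (congrArg (·.1.1) h₂).symm (congrArg Subtype.val hs))
  · intro ν hν
    have hrng : ν.1.rng = G.s f'.1.1 := by
      rw [← Path.rng_trunc m, show Path.trunc m ν.1 = f'.1.2 from congrArg Subtype.val hν]
      exact f'.2.2
    exact ⟨⟨(f'.1.1, ν.1), ν.2, hrng⟩,
      Subtype.ext (Prod.ext rfl (congrArg Subtype.val hν)), rfl⟩

theorem pushf_eq_pushforward (hm : 0 < m) (g : PathLt G n → ℝ) :
    pushf G n m g = pushforward (truncLt hm) g := by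
  funext μ
  simp only [pushf, pushforward, truncLt, Subtype.ext_iff]

end DGraph

open DGraph in
theorem Aact_intertwines_pushf_general (G : DGraph) [Finite G.V] [Finite G.E]
    (m n : ℕ) (hm : 0 < m) (hdvd : m ∣ n) (g : PathLt G n → ℝ) :
    ∀ μ : PathLt G m, Aact G m (pushf G n m g) μ = pushf G n m (Aact G n g) μ := by
  intro μ
  rw [pushf_eq_pushforward hm, pushf_eq_pushforward hm]
  exact adj_pushforward_of_bijOn (truncLt hm) (truncEdge hm) (r_truncEdge hm hdvd)
    (bijOn_s_truncEdge hm) g μ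

open DGraph in
/-- Let `E` be a finite directed graph with no sources and `m ∣ n` with
`m, n ≥ 1`.  The adjacency matrices of `E(m)` and `E(n)` are intertwined by the pushforward
along `ν ↦ [ν]_m`: for every vector `g` on `E^{<n}`,
`A_m (p_{n,m}* g) = p_{n,m}* (A_n g)`. -/
theorem Aact_intertwines_pushf (G : DGraph) [Finite G.V] [Finite G.E] (hns : NoSources G)
    (m n : ℕ) (hm : 0 < m) (hn : 0 < n) (hdvd : m ∣ n) (g : PathLt G n → ℝ) :
    ∀ μ : PathLt G m, Aact G m (pushf G n m g) μ = pushf G n m (Aact G n g) μ :=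
  Aact_intertwines_pushf_general G m n hm hdvd g
end
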